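/- Let Q be a prime power, α ∈ F_Q^*, and let m, s be positive integers with gcd(m, Q−1) = 1. Put q = Q^m. Then f(x) := α·x^(1+s(q−1)/(Q−1)) is a complete permutation polynomial over F_q if and only if (1) gcd(1 + s(q−1)/(Q−1), Q−1) = 1 and (2) α·x^(ms+1) + x permutes F_Q. -/
import Mathlib

open Function Polynomial

private lemma geom_aux (Q : ℕ) (hQ : 1 < Q) (m : ℕ) :
    (Q - 1) * ∑ i ∈ Finset.range m, Q ^ i = Q ^ m - 1 := by
  induction m with
  | zero => simp
  | succ k ih =>
    rw [Finset.sum_range_succ, Nat.mul_add, ih]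
    have h1 : 1 ≤ Q ^ k := Nat.one_le_pow _ _ (by omega)
    have h2 : Q * Q ^ k = Q ^ (k + 1) := (pow_succ' Q k).symm
    have h3 : (Q - 1) * Q ^ k = Q * Q ^ k - Q ^ k := by
      rw [Nat.sub_mul, one_mul]
    have h4 : Q ^ k ≤ Q * Q ^ k := Nat.le_mul_of_pos_left _ (by omega)
    omega

-- monomial permutation criterion
private lemma monomial_bij {L : Type*} [Field L] [Fintype L] (c : L) (hc : c ≠ 0)
    (d : ℕ) (hd : 0 < d) :
    Bijective (fun x : L => c * x ^ d) ↔ Nat.Coprime d (Fintype.card L - 1) := by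
  classical
  have hcomp : (fun x : L => c * x ^ d) = (Equiv.mulLeft₀ c hc) ∘ (fun x : L => x ^ d) := rfl
  rw [hcomp, Equiv.comp_bijective]
  have hcardu : Nat.card Lˣ = Fintype.card L - 1 := by
    rw [Nat.card_units, Nat.card_eq_fintype_card]
  constructor
  · intro hb
    by_contra hncop
    have hg0 : Nat.gcd d (Fintype.card L - 1) ≠ 0 := by
      intro h; exact hd.ne' (Nat.eq_zero_of_gcd_eq_zero_left h)
    set p := (Nat.gcd d (Fintype.card L - 1)).minFac with hp
    have hpp : p.Prime := Nat.minFac_prime hncop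
    have hpd : p ∣ d := (Nat.minFac_dvd _).trans (Nat.gcd_dvd_left _ _)
    have hpc : p ∣ Fintype.card Lˣ := by
      rw [Fintype.card_units]
      exact (Nat.minFac_dvd _).trans (Nat.gcd_dvd_right _ _)
    haveI := Fact.mk hpp
    obtain ⟨ζ, hζ⟩ := exists_prime_orderOf_dvd_card (G := Lˣ) p hpc
    have hζd : ζ ^ d = 1 := by
      rw [← orderOf_dvd_iff_pow_eq_one, hζ]; exact hpd
    have h1 : ((ζ : L)) ^ d = (1 : L) ^ d := by
      rw [one_pow, ← Units.val_pow_eq_pow_val, hζd, Units.val_one]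
    have := hb.injective (show (fun x : L => x ^ d) (ζ : L) = (fun x : L => x ^ d) 1 by
      simpa using h1)
    have hζ1 : ζ = 1 := Units.ext (by simpa using this)
    rw [hζ1, orderOf_one] at hζ
    exact hpp.one_lt.ne' hζ.symm
  · intro hcop
    rw [Finite.injective_iff_bijective.symm]
    have hu : Bijective (fun u : Lˣ => u ^ d) :=
      Nat.Coprime.pow_left_bijective (by rwa [hcardu, Nat.coprime_comm])
    intro x y hxy
    simp only at hxy
    rcases eq_or_ne x 0 with rfl | hx
    · rw [zero_pow hd.ne', eq_comm, pow_eq_zero_iff hd.ne'] at hxy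
      exact hxy.symm
    rcases eq_or_ne y 0 with rfl | hy
    · rw [zero_pow hd.ne', pow_eq_zero_iff hd.ne'] at hxy
      exact hxy
    have : Units.mk0 x hx ^ d = Units.mk0 y hy ^ d := by
      ext; simpa using hxy
    have := hu.injective this
    simpa using congrArg Units.val this

-- surjectivity of the e-th power map onto n-th roots of unity
private lemma pow_e_surj {L : Type*} [Field L] [Fintype L] (n e : ℕ) (hn : 0 < n)
    (hcard : Fintype.card L - 1 = n * e) (y : L) (hy : y ^ n = 1) :
    ∃ x : L, x ≠ 0 ∧ x ^ e = y := by
  classical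
  have hy0 : y ≠ 0 := by
    intro h; rw [h, zero_pow hn.ne'] at hy; exact zero_ne_one hy
  obtain ⟨g, hg⟩ := IsCyclic.exists_generator (α := Lˣ)
  have hord : orderOf g = n * e := by
    rw [orderOf_eq_card_of_forall_mem_zpowers hg, Nat.card_units, Nat.card_eq_fintype_card,
      hcard]
  obtain ⟨k, hk0⟩ := mem_powers_iff_mem_zpowers.mpr (hg (Units.mk0 y hy0))
  have hk : g ^ k = Units.mk0 y hy0 := hk0
  have hgkn : g ^ (k * n) = 1 := by
    rw [pow_mul, hk]; ext; simpa using hy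
  have hdvd : orderOf g ∣ k * n := orderOf_dvd_of_pow_eq_one hgkn
  rw [hord] at hdvd
  have hek : e ∣ k := by
    have : n * e ∣ n * k := by rwa [mul_comm k n] at hdvd
    exact (mul_dvd_mul_iff_left hn.ne').mp this
  obtain ⟨j, rfl⟩ := hek
  refine ⟨((g ^ j : Lˣ) : L), Units.ne_zero _, ?_⟩
  have : (g ^ j) ^ e = Units.mk0 y hy0 := by
    rw [← pow_mul, mul_comm j e, hk]
  rw [← Units.val_pow_eq_pow_val, this]
  rfl

-- characterization of the image of K in L
private lemma image_char {K L : Type*} [Field K] [Fintype K] [Field L] [Fintype L]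
    [Algebra K L] {Q : ℕ} (hK : Fintype.card K = Q) (y : L) :
    y ^ Q = y ↔ ∃ z : K, algebraMap K L z = y := by
  classical
  have hQ2 : 1 < Q := hK ▸ Fintype.one_lt_card
  constructor
  · intro hy
    set T : Finset L := Finset.univ.filter (fun y : L => y ^ Q = y) with hT
    set I : Finset L := Finset.univ.image (algebraMap K L) with hI
    have hIT : I ⊆ T := by
      intro x hx
      simp only [hI, Finset.mem_image] at hx
      obtain ⟨z, _, rfl⟩ := hx
      simp only [hT, Finset.mem_filter, Finset.mem_univ, true_and]
      rw [← map_pow]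
      congr 1
      rw [← hK]; exact FiniteField.pow_card z
    have hTcard : T.card ≤ Q := by
      have hsub : T ⊆ (X ^ Q - X : L[X]).roots.toFinset := by
        intro x hx
        simp only [hT, Finset.mem_filter] at hx
        rw [Multiset.mem_toFinset, mem_roots (FiniteField.X_pow_card_sub_X_ne_zero L hQ2)]
        simp [IsRoot, sub_eq_zero, hx.2]
      calc T.card ≤ (X ^ Q - X : L[X]).roots.toFinset.card := Finset.card_le_card hsub
        _ ≤ Multiset.card (X ^ Q - X : L[X]).roots := Multiset.toFinset_card_le _
        _ ≤ (X ^ Q - X : L[X]).natDegree := card_roots' _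
        _ = Q := FiniteField.X_pow_card_sub_X_natDegree_eq L hQ2
    have hIcard : I.card = Q := by
      rw [hI, Finset.card_image_of_injective _ (algebraMap K L).injective,
        Finset.card_univ, hK]
    have hEq : I = T := Finset.eq_of_subset_of_card_le hIT (by omega)
    have hyT : y ∈ T := by simp [hT, hy]
    rw [← hEq, hI] at hyT
    simpa using hyT
  · rintro ⟨z, rfl⟩
    rw [← map_pow]
    congr 1
    rw [← hK]; exact FiniteField.pow_card z

private lemma image_char' {K L : Type*} [Field K] [Fintype K] [Field L] [Fintype L]
    [Algebra K L] {Q : ℕ} (hK : Fintype.card K = Q) (y : L) :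
    y ^ (Q - 1) = 1 ↔ ∃ z : K, z ≠ 0 ∧ algebraMap K L z = y := by
  have hQ2 : 1 < Q := hK ▸ Fintype.one_lt_card
  constructor
  · intro hy
    have hy0 : y ≠ 0 := by
      intro h; rw [h, zero_pow (by omega : Q - 1 ≠ 0)] at hy; exact zero_ne_one hy
    have hyQ : y ^ Q = y := by
      have : y ^ Q = y ^ (Q - 1) * y := by
        rw [← pow_succ]; congr 1; omega
      rw [this, hy, one_mul]
    obtain ⟨z, hz⟩ := (image_char hK y).mp hyQ
    refine ⟨z, ?_, hz⟩
    rintro rfl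
    rw [map_zero] at hz
    exact hy0 hz.symm
  · rintro ⟨z, hz0, rfl⟩
    rw [← map_pow, ← map_one (algebraMap K L)]
    congr 1
    rw [← hK]
    exact FiniteField.pow_card_sub_one_eq_one z hz0

-- Zieve-type criterion, r = 1 case
private lemma zieve {L : Type*} [Field L] [Fintype L] (n e : ℕ) (hn : 0 < n) (he : 0 < e)
    (hcard : Fintype.card L - 1 = n * e) (H : L → L) :
    Bijective (fun x : L => x * H (x ^ e)) ↔
      Set.BijOn (fun y : L => y * H y ^ e) {y : L | y ^ n = 1} {y : L | y ^ n = 1} := by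
  set S : Set L := {y : L | y ^ n = 1} with hSdef
  have h0S : (0 : L) ∉ S := by
    simp [hSdef, zero_pow hn.ne']
  have hmemS : ∀ x : L, x ≠ 0 → x ^ e ∈ S := by
    intro x hx
    simp only [hSdef, Set.mem_setOf_eq, ← pow_mul]
    rw [mul_comm e n, ← hcard]
    exact FiniteField.pow_card_sub_one_eq_one x hx
  constructor
  · intro hF
    have hF0 : (fun x : L => x * H (x ^ e)) 0 = 0 := by simp
    have hFne : ∀ x : L, x ≠ 0 → x * H (x ^ e) ≠ 0 := by
      intro x hx h
      exact hx (hF.injective (h.trans hF0.symm))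
    have hMapsTo : Set.MapsTo (fun y : L => y * H y ^ e) S S := by
      intro y hy
      obtain ⟨x, hx0, rfl⟩ := pow_e_surj n e hn hcard y hy
      have : (x ^ e) * H (x ^ e) ^ e = (x * H (x ^ e)) ^ e := by rw [mul_pow]
      simp only [Set.mem_setOf_eq, this]
      exact hmemS _ (hFne x hx0)
    refine (Set.Finite.surjOn_iff_bijOn_of_mapsTo (Set.toFinite S) hMapsTo).mp ?_
    intro z hz
    obtain ⟨w, hw0, rfl⟩ := pow_e_surj n e hn hcard z hz
    obtain ⟨x, hx⟩ := hF.surjective w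
    have hx0 : x ≠ 0 := by
      rintro rfl
      rw [hF0] at hx
      exact hw0 hx.symm
    have hx' : x * H (x ^ e) = w := hx
    refine ⟨x ^ e, hmemS x hx0, ?_⟩
    simp only
    rw [← mul_pow, hx']
  · intro hB
    rw [← Finite.injective_iff_bijective]
    have hHne : ∀ x : L, x ≠ 0 → H (x ^ e) ≠ 0 := by
      intro x hx hzero
      have := hB.mapsTo (hmemS x hx)
      simp only [Set.mem_setOf_eq, hzero, zero_pow he.ne', mul_zero] at this
      exact h0S this
    intro x1 x2 h12
    simp only at h12
    rcases eq_or_ne x1 0 with rfl | hx1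
    · rcases eq_or_ne x2 0 with rfl | hx2
      · rfl
      · rw [zero_mul, eq_comm] at h12
        exact absurd h12 (mul_ne_zero hx2 (hHne x2 hx2))
    rcases eq_or_ne x2 0 with rfl | hx2
    · rw [zero_mul] at h12
      exact absurd h12 (mul_ne_zero hx1 (hHne x1 hx1))
    have hμ : x1 ^ e * H (x1 ^ e) ^ e = x2 ^ e * H (x2 ^ e) ^ e := by
      rw [← mul_pow, ← mul_pow, h12]
    have hee : x1 ^ e = x2 ^ e := hB.injOn (hmemS x1 hx1) (hmemS x2 hx2) hμ
    rw [hee] at h12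
    exact mul_right_cancel₀ (hHne x2 hx2) h12

-- transfer between BijOn on roots-of-unity set and a map on K
private lemma bijOn_image_iff {K L : Type*} [Field K] [Fintype K] [Field L]
    [Algebra K L] (S : Set L) (μ : L → L) (g : K → K)
    (hS : ∀ y : L, y ∈ S ↔ ∃ z : K, z ≠ 0 ∧ algebraMap K L z = y)
    (hcomm : ∀ z : K, μ (algebraMap K L z) = algebraMap K L (g z))
    (hg0 : g 0 = 0) :
    Set.BijOn μ S S ↔ Bijective g := by
  have hinj := (algebraMap K L).injective
  have h0S : (0 : L) ∉ S := by
    rw [hS]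
    rintro ⟨z, hz0, hz⟩
    exact hz0 (hinj (hz.trans (map_zero _).symm))
  constructor
  · intro hB
    rw [← Finite.injective_iff_bijective]
    intro z1 z2 h12
    rcases eq_or_ne z1 0 with rfl | hz1
    · rcases eq_or_ne z2 0 with rfl | hz2
      · rfl
      · exfalso
        have hm : algebraMap K L z2 ∈ S := (hS _).mpr ⟨z2, hz2, rfl⟩
        have := hB.mapsTo hm
        rw [hcomm, ← h12, hg0, map_zero] at this
        exact h0S this
    rcases eq_or_ne z2 0 with rfl | hz2
    · exfalso
      have hm : algebraMap K L z1 ∈ S := (hS _).mpr ⟨z1, hz1, rfl⟩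
      have := hB.mapsTo hm
      rw [hcomm, h12, hg0, map_zero] at this
      exact h0S this
    have := hB.injOn ((hS _).mpr ⟨z1, hz1, rfl⟩) ((hS _).mpr ⟨z2, hz2, rfl⟩)
      (by rw [hcomm, hcomm, h12])
    exact hinj this
  · intro hg
    have hgne : ∀ z : K, z ≠ 0 → g z ≠ 0 := by
      intro z hz h
      exact hz (hg.injective (h.trans hg0.symm))
    refine ⟨?_, ?_, ?_⟩
    · rintro y hy
      obtain ⟨z, hz0, rfl⟩ := (hS y).mp hy
      rw [hcomm]
      exact (hS _).mpr ⟨g z, hgne z hz0, rfl⟩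
    · intro y1 hy1 y2 hy2 h12
      obtain ⟨z1, hz1, rfl⟩ := (hS y1).mp hy1
      obtain ⟨z2, hz2, rfl⟩ := (hS y2).mp hy2
      rw [hcomm, hcomm] at h12
      rw [hg.injective (hinj h12)]
    · intro y hy
      obtain ⟨z, hz0, rfl⟩ := (hS y).mp hy
      obtain ⟨w, hw⟩ := hg.surjective z
      have hw0 : w ≠ 0 := by
        rintro rfl; rw [hg0] at hw; exact hz0 hw.symm
      exact ⟨algebraMap K L w, (hS _).mpr ⟨w, hw0, rfl⟩, by rw [hcomm, hw]⟩

theorem stmt_17 (Q m s : ℕ) (hm : 0 < m) (hs : 0 < s) (hcop : Nat.gcd m (Q - 1) = 1)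
    (K L : Type*) [Field K] [Fintype K] [Field L] [Fintype L] [Algebra K L]
    (hK : Fintype.card K = Q) (hL : Fintype.card L = Q ^ m)
    (α : K) (hα : α ≠ 0) :
    (Function.Bijective
        (fun x : L => algebraMap K L α * x ^ (1 + s * ((Q ^ m - 1) / (Q - 1)))) ∧
      Function.Bijective
        (fun x : L => algebraMap K L α * x ^ (1 + s * ((Q ^ m - 1) / (Q - 1))) + x)) ↔
      (Nat.gcd (1 + s * ((Q ^ m - 1) / (Q - 1))) (Q - 1) = 1 ∧
        Function.Bijective (fun x : K => α * x ^ (m * s + 1) + x)) := by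
  classical
  have hQ2 : 1 < Q := hK ▸ Fintype.one_lt_card
  set e : ℕ := (Q ^ m - 1) / (Q - 1) with he_def
  -- geometric sum facts
  have hgeom : (Q - 1) * ∑ i ∈ Finset.range m, Q ^ i = Q ^ m - 1 :=
    geom_aux Q hQ2 m
  have he_eq : e = ∑ i ∈ Finset.range m, Q ^ i := by
    rw [he_def, ← hgeom, Nat.mul_div_cancel_left _ (by omega : 0 < Q - 1)]
  have he_pos : 0 < e := by
    rw [he_eq]
    calc 0 < Q ^ 0 := Nat.one_le_pow _ _ (by omega)
      _ ≤ ∑ i ∈ Finset.range m, Q ^ i :=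
        Finset.single_le_sum (fun i _ => Nat.zero_le _) (Finset.mem_range.mpr hm)
  have hmul : Q ^ m - 1 = (Q - 1) * e := by rw [he_eq, hgeom]
  set d : ℕ := 1 + s * e with hd_def
  have hd_pos : 0 < d := by omega
  set ι := algebraMap K L with hι
  have hc : ι α ≠ 0 := by
    intro h
    exact hα ((algebraMap K L).injective (h.trans (map_zero _).symm))
  -- K-side exponent fact : z ^ e = z ^ m for z : K
  have hKe : ∀ z : K, z ^ e = z ^ m := by
    intro z
    rw [he_eq, ← Finset.prod_pow_eq_pow_sum]
    calc ∏ i ∈ Finset.range m, z ^ Q ^ i = ∏ i ∈ Finset.range m, z := by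
          refine Finset.prod_congr rfl fun i _ => ?_
          rw [← hK]; exact FiniteField.pow_card_pow i z
      _ = z ^ m := by rw [Finset.prod_const, Finset.card_range]
  -- Part A
  have partA : Bijective (fun x : L => ι α * x ^ d) ↔ Nat.gcd d (Q - 1) = 1 := by
    rw [monomial_bij (ι α) hc d hd_pos, hL]
    have hde : Nat.Coprime d e := by
      rw [hd_def, mul_comm s e]
      exact (Nat.coprime_add_mul_left_left 1 e s).mpr (Nat.coprime_one_left e)
    rw [← Nat.coprime_iff_gcd_eq_one]
    constructor
    · intro h
      exact Nat.Coprime.coprime_dvd_right ⟨e, hmul⟩ h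
    · intro h
      rw [hmul]
      exact Nat.Coprime.mul_right h hde
  -- Part B
  set S : Set L := {y : L | y ^ (Q - 1) = 1} with hS_def
  set g : K → K := fun z => z * (α * z ^ s + 1) ^ m with hg_def
  have partB : Bijective (fun x : L => ι α * x ^ d + x) ↔
      Bijective (fun x : K => α * x ^ (m * s + 1) + x) := by
    have hrw : (fun x : L => ι α * x ^ d + x)
        = fun x : L => x * (ι α * (x ^ e) ^ s + 1) := by
      funext x
      simp only [hd_def]
      rw [← pow_mul, pow_add, pow_one]
      ring
    have hz := zieve (Q - 1) e (by omega) he_pos (by rw [hL]; omega)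
      (fun y : L => ι α * y ^ s + 1)
    have hSchar : ∀ y : L, y ∈ {y : L | y ^ (Q - 1) = 1} ↔
        ∃ z : K, z ≠ 0 ∧ algebraMap K L z = y := fun y => image_char' hK y
    have hb := bijOn_image_iff {y : L | y ^ (Q - 1) = 1}
      (fun y : L => y * (ι α * y ^ s + 1) ^ e) g hSchar ?_ (by simp [hg_def])
    rw [hrw, hz, hb]
    · -- conjugation step: Bijective g ↔ Bijective h
      have hσ : Bijective (fun x : K => x ^ m) := by
        have := (monomial_bij (1 : K) one_ne_zero m hm).mpr
          (by rw [hK]; exact hcop)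
        simpa using this
      have hconj : (g ∘ fun x : K => x ^ m)
          = (fun x : K => x ^ m) ∘ (fun x : K => α * x ^ (m * s + 1) + x) := by
        funext x
        simp only [comp_apply, hg_def]
        rw [← pow_mul]
        have h5 : α * x ^ (m * s + 1) + x = x * (α * x ^ (m * s) + 1) := by
          rw [pow_add, pow_one]; ring
        rw [h5, mul_pow]
      constructor
      · intro hg
        have h1 : Bijective (g ∘ fun x : K => x ^ m) := hg.comp hσ
        rw [hconj] at h1
        exact (Bijective.of_comp_iff' hσ _).mp h1
      · intro hh
        have h1 : Bijective ((fun x : K => x ^ m) ∘ fun x : K => α * x ^ (m * s + 1) + x) :=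
          hσ.comp hh
        rw [← hconj] at h1
        exact (Bijective.of_comp_iff _ hσ).mp h1
    · -- commutation: μ (ι z) = ι (g z)
      intro z
      simp only [hg_def]
      rw [← map_pow, ← map_mul, ← map_one ι, ← map_add, ← map_pow, ← map_mul]
      congr 1
      rw [hKe]
  exact and_congr partA partB
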